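/- arXiv:2409.15325 — 6 statements merged into one kernel-verified Lean document; each statement's English description precedes it below -/
import Mathlib

section
/- Let α, ρ ∈ (−∞,1) \ {0}, s ∈ (0,1], C ∈ {0,1}, and let z, z' > 0 satisfy z^{ρ/(1−ρ)} = 1 + (s^{1/α − C} z')^{ρ/(1−ρ)}. Let X > 0, set X' := s^{−C}(1 − z^{ρ/(ρ−1)}) X, and define consumptions c := z^{ρ/(ρ−1)} X and c' := (z')^{ρ/(ρ−1)} X'. Then c' = (s^{1/α − C/ρ})^{ρ/(1−ρ)} · c. -/
/-- Optimal consumption dynamics when `μ = r = 0` and `β = 1`: with the Epstein–Zin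
recursion `z^{ρ/(1−ρ)} = 1 + (s^{1/α − C} z')^{ρ/(1−ρ)}`, post-consumption wealth
`X' = s^{−C}(1 − z^{ρ/(ρ−1)}) X`, and consumptions `c = z^{ρ/(ρ−1)} X`,
`c' = (z')^{ρ/(ρ−1)} X'`, one has `c' = (s^{1/α − C/ρ})^{ρ/(1−ρ)} · c`. -/
theorem epstein_zin_consumption_dynamics (α ρ s : ℝ) (C : ℝ)
    (hα1 : α < 1) (hα0 : α ≠ 0) (hρ1 : ρ < 1) (hρ0 : ρ ≠ 0)
    (hs : s ∈ Set.Ioc (0:ℝ) 1) (hC : C = 0 ∨ C = 1)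
    (z z' : ℝ) (hz : 0 < z) (hz' : 0 < z')
    (hrec : z ^ (ρ/(1-ρ)) = 1 + (s ^ (1/α - C) * z') ^ (ρ/(1-ρ)))
    (X : ℝ) (hX : 0 < X)
    (X' : ℝ) (hX' : X' = s ^ (-C) * (1 - z ^ (ρ/(ρ-1))) * X)
    (c c' : ℝ) (hc : c = z ^ (ρ/(ρ-1)) * X) (hc' : c' = z' ^ (ρ/(ρ-1)) * X') :
    c' = (s ^ (1/α - C/ρ)) ^ (ρ/(1-ρ)) * c := by
  obtain ⟨hs0, hs1⟩ := hs
  set a := ρ/(1-ρ) with ha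
  have h1ρ : (1:ℝ) - ρ ≠ 0 := by linarith
  have hneg : ρ/(ρ-1) = -a := by
    rw [ha, show ρ - 1 = -(1-ρ) by ring, div_neg]
  have hA : 0 < z ^ a := Real.rpow_pos_of_pos hz a
  have hse : 0 < s ^ (1/α - C) := Real.rpow_pos_of_pos hs0 _
  have hzneg : z ^ (ρ/(ρ-1)) = (z ^ a)⁻¹ := by
    rw [hneg, Real.rpow_neg hz.le]
  have hz'neg : z' ^ (ρ/(ρ-1)) = (z' ^ a)⁻¹ := by
    rw [hneg, Real.rpow_neg hz'.le]
  have hmul : (s ^ (1/α - C) * z') ^ a = (s ^ (1/α - C)) ^ a * z' ^ a :=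
    Real.mul_rpow hse.le hz'.le
  have hone : 1 - (z ^ a)⁻¹ = (s ^ (1/α - C)) ^ a * z' ^ a / z ^ a := by
    rw [eq_div_iff hA.ne', sub_mul, inv_mul_cancel₀ hA.ne', hrec, hmul]; ring
  have hz'a : 0 < z' ^ a := Real.rpow_pos_of_pos hz' a
  have key : c' = s ^ (-C) * (s ^ (1/α - C)) ^ a * (z ^ a)⁻¹ * X := by
    rw [hc', hX', hzneg, hz'neg, hone]
    field_simp
  rw [key, hc, hzneg]
  have hexp : s ^ (-C) * (s ^ (1/α - C)) ^ a = (s ^ (1/α - C/ρ)) ^ a := by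
    rw [← Real.rpow_mul hs0.le, ← Real.rpow_mul hs0.le, ← Real.rpow_add hs0]
    congr 1
    rw [ha]
    field_simp
    ring
  rw [← hexp]
  ring
end

section
/- Let s ∈ (0,1) and α, ρ ∈ (−∞,1) \ {0}. Define the collectivised consumption growth exponent e_coll := (1/α − 1/ρ)·ρ/(1−ρ) and the individual consumption growth exponent e_ind := (1/α)·ρ/(1−ρ). Then: (i) if α < ρ < 0 then s^{e_coll} > 1 and s^{e_ind} < 1; (ii) if α < 0 < ρ < 1 then s^{e_coll} > 1 and s^{e_ind} > 1; (iii) if 0 < α < ρ < 1 then s^{e_coll} < 1 and s^{e_ind} < 1; (iv) if α = ρ then s^{e_coll} = 1 and s^{e_ind} < 1. -/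
/-- Direction of optimal consumption over time when `μ = r = 0`, `β = 1`:
with survival probability `s ∈ (0,1)`, collectivised growth exponent
`e_coll = (1/α − 1/ρ)·ρ/(1−ρ)` and individual growth exponent
`e_ind = (1/α)·ρ/(1−ρ)`, consumption is increasing (factor `> 1`) or
decreasing (factor `< 1`) as described in each parameter regime. -/
theorem consumption_direction (s α ρ : ℝ) (hs : s ∈ Set.Ioo (0:ℝ) 1)
    (hα1 : α < 1) (hα0 : α ≠ 0) (hρ1 : ρ < 1) (hρ0 : ρ ≠ 0) :
    ∀ eColl eInd : ℝ,
      eColl = (1/α - 1/ρ) * (ρ/(1-ρ)) →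
      eInd = (1/α) * (ρ/(1-ρ)) →
      ((α < ρ ∧ ρ < 0) → (1 < s ^ eColl ∧ s ^ eInd < 1)) ∧
      ((α < 0 ∧ 0 < ρ) → (1 < s ^ eColl ∧ 1 < s ^ eInd)) ∧
      ((0 < α ∧ α < ρ) → (s ^ eColl < 1 ∧ s ^ eInd < 1)) ∧
      (α = ρ → (s ^ eColl = 1 ∧ s ^ eInd < 1)) := by
  obtain ⟨hs0, hs1⟩ := hs
  intro eColl eInd hC hI
  have h1ρ : 0 < 1 - ρ := by linarith
  have big : ∀ e : ℝ, e < 0 → 1 < s ^ e := fun e he =>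
    Real.one_lt_rpow_of_pos_of_lt_one_of_neg hs0 hs1 he
  have small : ∀ e : ℝ, 0 < e → s ^ e < 1 := fun e he =>
    Real.rpow_lt_one hs0.le hs1 he
  refine ⟨?_, ?_, ?_, ?_⟩
  · rintro ⟨h1, h2⟩
    have hα : α < 0 := h1.trans h2
    have hd : 0 < 1/α - 1/ρ := by
      rw [div_sub_div _ _ hα0 hρ0]
      exact div_pos (by linarith) (mul_pos_of_neg_of_neg hα h2)
    have hr : ρ/(1-ρ) < 0 := div_neg_of_neg_of_pos h2 h1ρ
    refine ⟨big _ ?_, small _ ?_⟩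
    · rw [hC]; exact mul_neg_of_pos_of_neg hd hr
    · rw [hI]
      exact mul_pos_of_neg_of_neg (one_div_neg.mpr hα) hr
  · rintro ⟨h1, h2⟩
    have hd : 1/α - 1/ρ < 0 := by
      have : 1/α < 0 := one_div_neg.mpr h1
      have : 0 < 1/ρ := one_div_pos.mpr h2
      linarith
    have hr : 0 < ρ/(1-ρ) := div_pos h2 h1ρ
    refine ⟨big _ ?_, big _ ?_⟩
    · rw [hC]; exact mul_neg_of_neg_of_pos hd hr
    · rw [hI]; exact mul_neg_of_neg_of_pos (one_div_neg.mpr h1) hr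
  · rintro ⟨h1, h2⟩
    have hρp : 0 < ρ := h1.trans h2
    have hd : 0 < 1/α - 1/ρ := by
      have := one_div_lt_one_div_of_lt h1 h2
      linarith
    have hr : 0 < ρ/(1-ρ) := div_pos hρp h1ρ
    refine ⟨small _ ?_, small _ ?_⟩
    · rw [hC]; exact mul_pos hd hr
    · rw [hI]; exact mul_pos (one_div_pos.mpr h1) hr
  · intro h
    subst h
    constructor
    · rw [hC]; simp
    · have : eInd = 1/(1-α) := by rw [hI]; field_simp
      rw [this]
      exact small _ (one_div_pos.mpr h1ρ)
end

section
/- Let s ∈ (0,1) and α ∈ (−∞,1). Then there exists a constant K > 0 such that for all integers n ≥ 1, |Σ_{i=1}^{n} (i/n)^{1−α} · C(n,i) s^i (1−s)^{n−i} − s^{1−α}| ≤ K·n^{−1/2}, where C(n,i) denotes the binomial coefficient n choose i. -/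
/-!
The sum is the Bernstein approximation `Bₙ f (s)` of `f t = t ^ (1 - α)` (the term `i = 0`
vanishes because `0 ^ (1 - α) = 0`). Since `f` is Lipschitz on `[s/2, 1]` and takes values in
`[0, 1]`, it satisfies `|f t - f s| ≤ L |t - s| + (4 / s²) (t - s)²` on all of `[0, 1]`.
Averaging against the binomial weights, the quadratic term contributes the variance
`s (1 - s) / n` and, by Cauchy–Schwarz, the linear one at most its square root.
-/

open scoped unitInterval
open Set

namespace Real

theorem rpow_le_max_rpow_one {c u q : ℝ} (hc : 0 < c) (hu : u ∈ Icc c 1) :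
    u ^ q ≤ max (c ^ q) 1 := by
  rcases le_or_gt q 0 with hq | hq
  · exact le_max_of_le_left (rpow_le_rpow_of_nonpos hc hu.1 hq)
  · exact le_max_of_le_right (rpow_le_one (hc.le.trans hu.1) hu.2 hq.le)

theorem abs_rpow_sub_rpow_le_of_mem_Icc {c p x y : ℝ} (hc : 0 < c) (hx : x ∈ Icc c 1)
    (hy : y ∈ Icc c 1) : |x ^ p - y ^ p| ≤ |p| * max (c ^ (p - 1)) 1 * |x - y| := by
  have hderiv : ∀ u ∈ Icc c 1,
      HasDerivWithinAt (fun t : ℝ => t ^ p) (p * u ^ (p - 1)) (Icc c 1) u :=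
    fun u hu => (hasDerivAt_rpow_const (.inl (hc.trans_le hu.1).ne')).hasDerivWithinAt
  have hbound : ∀ u ∈ Icc c 1, ‖p * u ^ (p - 1)‖ ≤ |p| * max (c ^ (p - 1)) 1 := by
    intro u hu
    rw [norm_mul, norm_eq_abs, norm_of_nonneg (rpow_nonneg (hc.le.trans hu.1) _)]
    exact mul_le_mul_of_nonneg_left (rpow_le_max_rpow_one hc hu) (abs_nonneg p)
  simpa only [norm_eq_abs] using
    (convex_Icc c 1).norm_image_sub_le_of_norm_hasDerivWithin_le hderiv hbound hy hx

theorem abs_rpow_sub_rpow_le_mul_abs_add_mul_sq {p s t : ℝ} (hp : 0 ≤ p) (hs : s ∈ Ioc 0 1)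
    (ht : t ∈ Icc 0 1) :
    |t ^ p - s ^ p| ≤ p * max ((s / 2) ^ (p - 1)) 1 * |t - s| + 4 / s ^ 2 * (t - s) ^ 2 := by
  obtain ⟨hs0, hs1⟩ := hs
  rcases le_or_gt (s / 2) t with hts | hts
  · have hlip := abs_rpow_sub_rpow_le_of_mem_Icc (p := p) (half_pos hs0) ⟨hts, ht.2⟩
      ⟨by linarith, hs1⟩
    rw [abs_of_nonneg hp] at hlip
    have : 0 ≤ 4 / s ^ 2 * (t - s) ^ 2 := by positivity
    linarith
  · -- far from `s` both powers lie in `[0, 1]`, and the quadratic term is at least `1`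
    have hdiff : |t ^ p - s ^ p| ≤ 1 :=
      abs_sub_le_of_nonneg_of_le (rpow_nonneg ht.1 p) (rpow_le_one ht.1 ht.2 hp)
        (rpow_nonneg hs0.le p) (rpow_le_one hs0.le hs1 hp)
    have hsq : 1 ≤ 4 / s ^ 2 * (t - s) ^ 2 := by
      rw [div_mul_eq_mul_div, le_div_iff₀ (by positivity)]
      nlinarith
    have : 0 ≤ p * max ((s / 2) ^ (p - 1)) 1 * |t - s| := by positivity
    linarith

end Real

namespace bernstein

theorem sum_abs_sub_mul_le_sqrt {n : ℕ} (hn : n ≠ 0) (x : I) :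
    ∑ k : Fin (n + 1), |(x : ℝ) - z k| * bernstein n k x ≤ √((x : ℝ) * (1 - x) / n) := by
  rw [← variance hn x]
  refine Real.le_sqrt_of_sq_le ?_
  calc (∑ k : Fin (n + 1), |(x : ℝ) - z k| * bernstein n k x) ^ 2
      ≤ (∑ k : Fin (n + 1), bernstein n k x) *
          ∑ k : Fin (n + 1), ((x : ℝ) - z k) ^ 2 * bernstein n k x :=
        Finset.sum_sq_le_sum_mul_sum_of_sq_le_mul _ (fun _ _ => bernstein_nonneg)
          (fun _ _ => by positivity) (fun _ _ => le_of_eq (by rw [mul_pow, sq_abs]; ring))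
    _ = _ := by rw [probability, one_mul]

theorem mul_one_sub_div_le_inv (n : ℕ) (x : I) : (x : ℝ) * (1 - x) / n ≤ (n : ℝ)⁻¹ := by
  rw [div_eq_mul_inv]
  refine mul_le_of_le_one_left (inv_nonneg.2 n.cast_nonneg) ?_
  exact mul_le_one₀ x.2.2 (by linarith [x.2.2]) (by linarith [x.2.1])

theorem sqrt_mul_one_sub_div_le (n : ℕ) (x : I) :
    √((x : ℝ) * (1 - x) / n) ≤ (n : ℝ) ^ (-(1 / 2) : ℝ) := by
  rw [Real.rpow_neg n.cast_nonneg, ← Real.sqrt_eq_rpow, ← Real.sqrt_inv]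
  exact Real.sqrt_le_sqrt (mul_one_sub_div_le_inv n x)

end bernstein

namespace bernsteinApproximation

theorem abs_apply_sub_le {f : C(I, ℝ)} {x : I} {L M : ℝ} (hL : 0 ≤ L) (hM : 0 ≤ M)
    (hf : ∀ y : I, |f y - f x| ≤ L * |(y : ℝ) - x| + M * ((y : ℝ) - x) ^ 2) {n : ℕ}
    (hn : n ≠ 0) :
    |bernsteinApproximation n f x - f x| ≤ (L + M) * (n : ℝ) ^ (-(1 / 2) : ℝ) := by
  set V : ℝ := (x : ℝ) * (1 - x) / n
  have hsqrt : √V ≤ (n : ℝ) ^ (-(1 / 2) : ℝ) := bernstein.sqrt_mul_one_sub_div_le n x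
  have hV : V ≤ √V := Real.le_sqrt_self_iff.2 <|
    (bernstein.mul_one_sub_div_le_inv n x).trans <|
      inv_le_one_of_one_le₀ (by exact_mod_cast Nat.one_le_iff_ne_zero.2 hn)
  calc |bernsteinApproximation n f x - f x|
      = |∑ k : Fin (n + 1), (f (bernstein.z k) - f x) * bernstein n k x| := by
        rw [apply]
        simp only [sub_mul, Finset.sum_sub_distrib, ← Finset.mul_sum, bernstein.probability,
          mul_one]
        simp only [smul_eq_mul, mul_comm]
    _ ≤ ∑ k : Fin (n + 1), (L * |(x : ℝ) - bernstein.z k|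
          + M * ((x : ℝ) - bernstein.z k) ^ 2) * bernstein n k x := by
        refine (Finset.abs_sum_le_sum_abs _ _).trans (Finset.sum_le_sum fun k _ => ?_)
        rw [abs_mul, abs_of_nonneg bernstein_nonneg, abs_sub_comm (x : ℝ), sub_sq_comm (x : ℝ)]
        exact mul_le_mul_of_nonneg_right (hf _) bernstein_nonneg
    _ = L * ∑ k : Fin (n + 1), |(x : ℝ) - bernstein.z k| * bernstein n k x
          + M * ∑ k : Fin (n + 1), ((x : ℝ) - bernstein.z k) ^ 2 * bernstein n k x := by
        simp only [add_mul, Finset.sum_add_distrib, Finset.mul_sum, mul_assoc]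
    _ ≤ L * √V + M * V := by
        rw [bernstein.variance hn x]
        gcongr
        exact bernstein.sum_abs_sub_mul_le_sqrt hn x
    _ ≤ (L + M) * (n : ℝ) ^ (-(1 / 2) : ℝ) := by
        rw [add_mul]
        gcongr
        exact hV.trans hsqrt

end bernsteinApproximation

noncomputable def unitInterval.rpow (p : ℝ) (hp : 0 ≤ p) : C(I, ℝ) :=
  ⟨fun t => (t : ℝ) ^ p, (Real.continuous_rpow_const hp).comp continuous_subtype_val⟩

theorem sum_Icc_div_rpow_mul_choose_eq_bernsteinApproximation {p : ℝ} (hp : 0 < p) (n : ℕ)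
    {s : ℝ} (hs : s ∈ I) :
    ∑ i ∈ Finset.Icc 1 n, ((i : ℝ) / n) ^ p * n.choose i * s ^ i * (1 - s) ^ (n - i) =
      bernsteinApproximation n (unitInterval.rpow p hp.le) ⟨s, hs⟩ := by
  rw [bernsteinApproximation.apply]
  change _ = ∑ k : Fin (n + 1), bernstein n k ⟨s, hs⟩ • ((k : ℝ) / n) ^ p
  rw [Fin.sum_univ_eq_sum_range (fun k => bernstein n k ⟨s, hs⟩ • ((k : ℝ) / n) ^ p),
    Finset.range_eq_Ico, Finset.sum_eq_sum_Ico_succ_bot (by omega), zero_add,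
    Finset.Ico_add_one_right_eq_Icc]
  simp only [CharP.cast_eq_zero, zero_div, Real.zero_rpow hp.ne', smul_eq_mul, mul_zero, zero_add]
  exact Finset.sum_congr rfl fun i _ => by rw [bernstein_apply]; ring

/-- Convergence rate of the longevity-credit factor: for `s ∈ (0,1)` and `α < 1`,
the binomial expectation `Σ_{i=1}^n (i/n)^{1−α} C(n,i) s^i (1−s)^{n−i}` converges
to `s^{1−α}` at rate `n^{−1/2}`. -/
theorem binomial_moment_convergence (s α : ℝ) (hs : s ∈ Set.Ioo (0:ℝ) 1) (hα : α < 1) :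
    ∃ K : ℝ, 0 < K ∧ ∀ n : ℕ, 1 ≤ n →
      |(∑ i ∈ Finset.Icc 1 n,
          ((i : ℝ) / (n : ℝ)) ^ (1 - α) * (n.choose i : ℝ) * s ^ i * (1 - s) ^ (n - i))
        - s ^ (1 - α)| ≤ K * (n : ℝ) ^ (-(1/2) : ℝ) := by
  obtain ⟨hs0, hs1⟩ := hs
  have hp : 0 < 1 - α := sub_pos.2 hα
  set L := (1 - α) * max ((s / 2) ^ (1 - α - 1)) 1
  have hL : 0 ≤ L := mul_nonneg hp.le (le_max_of_le_right zero_le_one)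
  refine ⟨L + 4 / s ^ 2, add_pos_of_nonneg_of_pos hL (by positivity), fun n hn => ?_⟩
  rw [sum_Icc_div_rpow_mul_choose_eq_bernsteinApproximation hp n ⟨hs0.le, hs1.le⟩]
  exact bernsteinApproximation.abs_apply_sub_le hL (by positivity)
    (fun y => Real.abs_rpow_sub_rpow_le_mul_abs_add_mul_sq hp.le ⟨hs0, hs1.le⟩ y.2) (by omega)
end

section
/- Let s ∈ (0,1), α < 1, and c > 0. Let (ℓ_n) and (u_n) be real sequences such that for all sufficiently large n: ℓ_n ≤ −c√n, u_n ≥ c√n, and s + ℓ_n·√(s(1−s)/n) ≥ 0. Then there exist K > 0 and n₀ such that for all n ≥ n₀, |∫_{ℓ_n}^{u_n} (s + x·√(s(1−s)/n))^{1−α} φ(x) dx − s^{1−α}| ≤ K·n^{−1/2}, where φ(x) = (2π)^{−1/2} e^{−x²/2} is the standard normal density. -/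
set_option maxHeartbeats 1000000

open Real MeasureTheory Set

lemma glh_exp_neg_le_inv {t : ℝ} (ht : 0 < t) : Real.exp (-t) ≤ 1 / t := by
  rw [Real.exp_neg]
  rw [one_div]
  exact inv_anti₀ ht (by linarith [Real.add_one_le_exp t])

lemma glh_abs_mul_exp_le (x : ℝ) :
    |x| * Real.exp (-x^2/2) ≤ 3 * Real.exp (-x^2/8) := by
  have h : Real.exp (-x^2/2) = Real.exp (-x^2/8) * Real.exp (-(3*x^2/8)) := by
    rw [← Real.exp_add]; ring_nf
  rw [h]
  have h1 := Real.add_one_le_exp (3*x^2/8)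
  have h2 : |x| * Real.exp (-(3*x^2/8)) ≤ 3 := by
    rw [Real.exp_neg, mul_inv_le_iff₀ (Real.exp_pos _)]
    nlinarith [sq_abs x, abs_nonneg x]
  calc |x| * (Real.exp (-x^2/8) * Real.exp (-(3*x^2/8)))
      = (|x| * Real.exp (-(3*x^2/8))) * Real.exp (-x^2/8) := by ring
    _ ≤ 3 * Real.exp (-x^2/8) := by
        apply mul_le_mul_of_nonneg_right h2 (Real.exp_pos _).le

lemma glh_rpow_le_exp {a p : ℝ} (ha : 0 ≤ a) (hp : 0 ≤ p) :
    a ^ p ≤ Real.exp (p * a) := by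
  calc a ^ p ≤ (Real.exp a) ^ p :=
        Real.rpow_le_rpow ha (by linarith [Real.add_one_le_exp a]) hp
    _ = Real.exp (a * p) := (Real.exp_mul a p).symm
    _ = Real.exp (p * a) := by rw [mul_comm]

lemma glh_integrable_exp_sq {b : ℝ} (hb : 0 < b) :
    Integrable (fun x : ℝ => Real.exp (-x^2/b)) := by
  have : (fun x : ℝ => Real.exp (-x^2/b)) = fun x => Real.exp (-(1/b) * x^2) := by
    ext x; ring_nf
  rw [this]
  exact integrable_exp_neg_mul_sq (by positivity)

lemma glh_integral_exp_sq {b : ℝ} (hb : 0 < b) :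
    (∫ x : ℝ, Real.exp (-x^2/b)) = Real.sqrt (Real.pi * b) := by
  have : (fun x : ℝ => Real.exp (-x^2/b)) = fun x => Real.exp (-(1/b) * x^2) := by
    ext x; ring_nf
  rw [this, integral_gaussian]
  congr 1
  field_simp

lemma glh_integral_exp_eighth_le : (∫ x : ℝ, Real.exp (-x^2/8)) ≤ 6 := by
  rw [glh_integral_exp_sq (by norm_num : (0:ℝ) < 8)]
  have h1 : Real.sqrt (Real.pi * 8) ≤ Real.sqrt 36 :=
    Real.sqrt_le_sqrt (by nlinarith [Real.pi_le_four])
  have h2 : Real.sqrt 36 = 6 := by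
    rw [show (36:ℝ) = 6^2 by norm_num, Real.sqrt_sq (by norm_num)]
  linarith

lemma glh_integral_exp_quarter_le : (∫ x : ℝ, Real.exp (-x^2/4)) ≤ 4 := by
  rw [glh_integral_exp_sq (by norm_num : (0:ℝ) < 4)]
  have h1 : Real.sqrt (Real.pi * 4) ≤ Real.sqrt 16 :=
    Real.sqrt_le_sqrt (by nlinarith [Real.pi_le_four])
  have h2 : Real.sqrt 16 = 4 := by
    rw [show (16:ℝ) = 4^2 by norm_num, Real.sqrt_sq (by norm_num)]
  linarith

lemma glh_gauss_tail {S : Set ℝ} (hS : MeasurableSet S) {T : ℝ}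
    (h : ∀ x ∈ S, T^2 ≤ x^2) :
    (∫ x in S, Real.exp (-x^2/2)) ≤ 4 * Real.exp (-T^2/4) := by
  have hint : Integrable (fun x : ℝ => Real.exp (-x^2/4)) := glh_integrable_exp_sq (by norm_num)
  have step1 : (∫ x in S, Real.exp (-x^2/2))
      ≤ ∫ x in S, Real.exp (-T^2/4) * Real.exp (-x^2/4) := by
    apply setIntegral_mono_on
    · exact ((glh_integrable_exp_sq (by norm_num : (0:ℝ) < 2)).integrableOn)
    · exact ((hint.integrableOn).const_mul _)
    · exact hS
    · intro x hx
      rw [← Real.exp_add]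
      apply Real.exp_le_exp.mpr
      have := h x hx
      linarith
  calc (∫ x in S, Real.exp (-x^2/2))
      ≤ ∫ x in S, Real.exp (-T^2/4) * Real.exp (-x^2/4) := step1
    _ = Real.exp (-T^2/4) * ∫ x in S, Real.exp (-x^2/4) := by
        rw [integral_const_mul]
    _ ≤ Real.exp (-T^2/4) * ∫ x : ℝ, Real.exp (-x^2/4) := by
        apply mul_le_mul_of_nonneg_left _ (Real.exp_pos _).le
        apply setIntegral_le_integral hint
        filter_upwards with x using (Real.exp_pos _).le
    _ ≤ Real.exp (-T^2/4) * 4 := by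
        apply mul_le_mul_of_nonneg_left glh_integral_exp_quarter_le (Real.exp_pos _).le
    _ = 4 * Real.exp (-T^2/4) := by ring

lemma glh_rpow_lipschitz {s p : ℝ} (hs : 0 < s) (hp : 0 < p) {a : ℝ}
    (ha1 : s/2 ≤ a) (ha2 : a ≤ s + s/2) :
    |a ^ p - s ^ p| ≤ (p * max ((s/2)^(p-1)) ((s+s/2)^(p-1))) * |a - s| := by
  set L := p * max ((s/2)^(p-1)) ((s+s/2)^(p-1)) with hL
  have key : ∀ x ∈ Set.Icc (s/2) (s+s/2), ‖deriv (fun t : ℝ => t ^ p) x‖ ≤ L := by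
    intro x hx
    have hx0 : 0 < x := lt_of_lt_of_le (by linarith) hx.1
    have hd : HasDerivAt (fun t : ℝ => t ^ p) (p * x ^ (p-1)) x :=
      Real.hasDerivAt_rpow_const (Or.inl hx0.ne')
    rw [hd.deriv]
    rw [Real.norm_eq_abs, abs_of_nonneg (by positivity)]
    rcases le_or_gt p 1 with hp1 | hp1
    · apply mul_le_mul_of_nonneg_left _ hp.le
      exact le_max_of_le_left (Real.rpow_le_rpow_of_nonpos (by linarith) hx.1 (by linarith))
    · apply mul_le_mul_of_nonneg_left _ hp.le
      exact le_max_of_le_right (Real.rpow_le_rpow hx0.le hx.2 (by linarith))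
  have hdiff : ∀ x ∈ Set.Icc (s/2) (s+s/2), DifferentiableAt ℝ (fun t : ℝ => t ^ p) x := by
    intro x hx
    have hx0 : 0 < x := lt_of_lt_of_le (by linarith) hx.1
    exact (Real.hasDerivAt_rpow_const (Or.inl hx0.ne')).differentiableAt
  have := (convex_Icc (s/2) (s+s/2)).norm_image_sub_le_of_norm_deriv_le hdiff key
    (⟨by linarith, by linarith⟩ : s ∈ Set.Icc (s/2) (s+s/2)) (⟨ha1, ha2⟩ : a ∈ Set.Icc (s/2) (s+s/2))
  simpa [Real.norm_eq_abs] using this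

/-- Laplace-method Gaussian integral estimate: for `s ∈ (0,1)`, `α < 1`, `c > 0`
and sequences `ℓ_n ≤ −c√n`, `u_n ≥ c√n` with `s + ℓ_n √(s(1−s)/n) ≥ 0` for large `n`,
the Gaussian integral `∫_{ℓ_n}^{u_n} (s + x√(s(1−s)/n))^{1−α} φ(x) dx` is within
`K n^{−1/2}` of `s^{1−α}` for all large `n`. -/
theorem gaussian_laplace_estimate (s α c : ℝ) (hs : s ∈ Set.Ioo (0:ℝ) 1)
    (hα : α < 1) (hc : 0 < c) (ℓ u : ℕ → ℝ)
    (hlarge : ∀ᶠ n : ℕ in Filter.atTop,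
      ℓ n ≤ -c * Real.sqrt n ∧ c * Real.sqrt n ≤ u n ∧
      0 ≤ s + ℓ n * Real.sqrt (s * (1 - s) / n)) :
    ∃ K : ℝ, 0 < K ∧ ∃ n₀ : ℕ, ∀ n : ℕ, n₀ ≤ n →
      |(∫ x in (ℓ n)..(u n),
          (s + x * Real.sqrt (s * (1 - s) / n)) ^ (1 - α)
            * ((2 * Real.pi) ^ (-(1/2) : ℝ) * Real.exp (-x^2 / 2)))
        - s ^ (1 - α)| ≤ K * (n : ℝ) ^ (-(1/2) : ℝ) := by
  obtain ⟨hs0, hs1⟩ := hs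
  set p := 1 - α with hpdef
  have hp : 0 < p := by simp only [hpdef]; linarith
  set D := Real.sqrt (s * (1 - s)) with hDdef
  have hD2 : D ^ 2 = s * (1 - s) := Real.sq_sqrt (by nlinarith)
  have hD : 0 < D := Real.sqrt_pos.mpr (by nlinarith)
  have hD1 : D ≤ 1 := by
    rw [hDdef]
    have h1 := Real.sqrt_le_sqrt (show s*(1-s) ≤ 1 by nlinarith)
    simpa using h1
  set L := p * max ((s/2)^(p-1)) ((s+s/2)^(p-1)) with hLdef
  have hL : 0 < L :=
    mul_pos hp (lt_max_of_lt_left (Real.rpow_pos_of_pos (by linarith) _))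
  set C₁ := 2 * Real.exp (p*s + p^2) with hC₁def
  have hC₁ : 0 < C₁ := by positivity
  have hsp : 0 < s ^ p := Real.rpow_pos_of_pos hs0 _
  have k1 : 0 < 18*L*D := by linarith only [mul_pos hL hD]
  have k2 : 0 < 6*C₁*(32*D^2/s^2) :=
    mul_pos (by linarith only [hC₁]) (div_pos (by linarith only [pow_pos hD 2]) (pow_pos hs0 2))
  have k3 : 0 < 32*(s^p)/c^2 := div_pos (by linarith only [hsp]) (pow_pos hc 2)
  refine ⟨18*L*D + 6*C₁*(32*D^2/s^2) + 32*(s^p)/c^2 + 1, by linarith only [k1, k2, k3], ?_⟩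
  rw [Filter.eventually_atTop] at hlarge
  obtain ⟨n₁, hn₁⟩ := hlarge
  refine ⟨max n₁ 1, fun n hn => ?_⟩
  obtain ⟨hℓ, hu, hbase⟩ := hn₁ n (le_trans (le_max_left _ _) hn)
  set N := (n : ℝ) with hNdef
  have hN1 : 1 ≤ N := by
    have h1 : (1:ℕ) ≤ n := le_trans (le_max_right _ _) hn
    rw [hNdef]; exact_mod_cast h1
  have hN0 : 0 < N := by linarith only [hN1]
  set δ := Real.sqrt (s * (1 - s) / N) with hδdef
  have hsqrtN : 0 < Real.sqrt N := Real.sqrt_pos.mpr hN0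
  have hNinv : N ^ (-(1/2) : ℝ) = (Real.sqrt N)⁻¹ := by
    rw [Real.rpow_neg hN0.le, Real.sqrt_eq_rpow]
  have hrNpos : 0 < N ^ (-(1/2) : ℝ) := Real.rpow_pos_of_pos hN0 _
  have hδD : δ = D * N ^ (-(1/2) : ℝ) := by
    rw [hδdef, Real.sqrt_div (mul_nonneg hs0.le (by linarith only [hs1])) N, hNinv, hDdef, div_eq_mul_inv]
  have hδ0 : 0 ≤ δ := Real.sqrt_nonneg _
  have hδ1 : δ ≤ 1 := by
    rw [hδdef]
    have h1 : Real.sqrt (s * (1-s) / N) ≤ Real.sqrt 1 :=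
      Real.sqrt_le_sqrt (by rw [div_le_one hN0]; linarith only [sq_nonneg (1-2*s), hN1])
    simpa using h1
  have hδ2 : δ^2 = D^2 / N := by
    rw [hδdef, Real.sq_sqrt (div_nonneg (mul_nonneg hs0.le (by linarith only [hs1])) hN0.le), hD2]
  have hcb : 0 < c * Real.sqrt N := mul_pos hc hsqrtN
  have hlu : ℓ n ≤ u n := by linarith only [hℓ, hu, hcb]
  set G := 3*L*D*N^(-(1/2):ℝ) + C₁ * Real.exp (-(s^2*N/(32*D^2))) with hGdef
  have hG : 0 < G := by
    have t1 : 0 < 3*L*D*N^(-(1/2):ℝ) := by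
      apply mul_pos (mul_pos (by linarith) hD) hrNpos
    have t2 : 0 < C₁ * Real.exp (-(s^2*N/(32*D^2))) := mul_pos hC₁ (Real.exp_pos _)
    rw [hGdef]; linarith
  -- master pointwise bound
  have hmaster : ∀ x ∈ Set.Icc (ℓ n) (u n),
      |(s + x*δ)^p - s^p| * Real.exp (-x^2/2) ≤ G * Real.exp (-x^2/8) := by
    intro x hx
    have hb0 : 0 ≤ s + x*δ := by
      linarith only [mul_nonneg (sub_nonneg.mpr hx.1) hδ0, hbase]
    rcases le_or_gt (|x| * δ) (s/2) with hA | hB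
    · -- region A
      have habs : |x*δ| = |x| * δ := by rw [abs_mul, abs_of_nonneg hδ0]
      have ha1 : s/2 ≤ s + x*δ := by
        have h1 : -(s/2) ≤ x*δ := by
          have := neg_abs_le (x*δ); rw [habs] at this; linarith only [this, hA]
        linarith only [h1]
      have ha2 : s + x*δ ≤ s + s/2 := by
        have h1 : x*δ ≤ s/2 := by
          have := le_abs_self (x*δ); rw [habs] at this; linarith only [this, hA]
        linarith only [h1]
      have hlip := glh_rpow_lipschitz hs0 hp ha1 ha2
      rw [add_sub_cancel_left, habs] at hlip
      calc |(s + x*δ)^p - s^p| * Real.exp (-x^2/2)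
          ≤ (L * (|x| * δ)) * Real.exp (-x^2/2) := by
            exact mul_le_mul_of_nonneg_right hlip (Real.exp_pos _).le
        _ = (L*δ) * (|x| * Real.exp (-x^2/2)) := by ring
        _ ≤ (L*δ) * (3 * Real.exp (-x^2/8)) :=
            mul_le_mul_of_nonneg_left (glh_abs_mul_exp_le x) (mul_nonneg hL.le hδ0)
        _ = (3*L*D*N^(-(1/2):ℝ)) * Real.exp (-x^2/8) := by rw [hδD]; ring
        _ ≤ G * Real.exp (-x^2/8) := by
            apply mul_le_mul_of_nonneg_right _ (Real.exp_pos _).le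
            have h9 : 0 < C₁ * Real.exp (-(s^2*N/(32*D^2))) := mul_pos hC₁ (Real.exp_pos _)
            rw [hGdef]; linarith only [h9]
    · -- region B
      have hx2 : s^2*N/(4*D^2) ≤ x^2 := by
        rw [div_le_iff₀ (by linarith only [pow_pos hD 2] : (0:ℝ) < 4*D^2)]
        have h1 : (s/2)^2 ≤ (|x| * δ)^2 := pow_le_pow_left₀ (by linarith only [hs0]) hB.le 2
        have h2 : (|x| * δ)^2 = x^2 * (D^2/N) := by rw [mul_pow, sq_abs, hδ2]
        rw [h2, div_eq_mul_inv] at h1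
        have h3 : (s/2)^2 * N ≤ x^2 * D^2 := by
          have := mul_le_mul_of_nonneg_right h1 hN0.le
          calc (s/2)^2 * N ≤ x^2 * (D^2 * N⁻¹) * N := this
            _ = x^2 * D^2 * (N⁻¹ * N) := by ring
            _ = x^2 * D^2 := by rw [inv_mul_cancel₀ hN0.ne']; ring
        linarith only [h3]
      have hxd : x * δ ≤ |x| := by
        calc x * δ ≤ |x| * δ := mul_le_mul_of_nonneg_right (le_abs_self x) hδ0
          _ ≤ |x| * 1 := mul_le_mul_of_nonneg_left hδ1 (abs_nonneg x)
          _ = |x| := mul_one _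
      have hfle : (s + x*δ)^p ≤ Real.exp (p*(s+|x|)) :=
        calc (s + x*δ)^p ≤ (s+|x|)^p := Real.rpow_le_rpow hb0 (by linarith only [hxd]) hp.le
          _ ≤ Real.exp (p*(s+|x|)) := glh_rpow_le_exp (by linarith only [hs0, abs_nonneg x]) hp.le
      have hsle : s^p ≤ Real.exp (p*(s+|x|)) :=
        calc s^p ≤ Real.exp (p*s) := glh_rpow_le_exp hs0.le hp.le
          _ ≤ Real.exp (p*(s+|x|)) := by
            apply Real.exp_le_exp.mpr; linarith only [mul_nonneg hp.le (abs_nonneg x)]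
      have habs2 : |(s + x*δ)^p - s^p| ≤ 2 * Real.exp (p*(s+|x|)) := by
        have h0 : 0 ≤ (s + x*δ)^p := Real.rpow_nonneg hb0 _
        have h1 : 0 ≤ s^p := hsp.le
        rw [abs_le]; constructor <;> linarith only [h0, h1, hfle, hsle, Real.exp_pos (p*(s+|x|))]
      calc |(s + x*δ)^p - s^p| * Real.exp (-x^2/2)
          ≤ (2 * Real.exp (p*(s+|x|))) * Real.exp (-x^2/2) :=
            mul_le_mul_of_nonneg_right habs2 (Real.exp_pos _).le
        _ = 2 * Real.exp (p*(s+|x|) + -x^2/2) := by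
            rw [Real.exp_add]; ring
        _ ≤ 2 * Real.exp ((p*s + p^2 + -(s^2*N/(32*D^2))) + -x^2/8) := by
            have h8 : s^2*N/(32*D^2) = (s^2*N/(4*D^2))/8 := by ring
            apply mul_le_mul_of_nonneg_left _ (by norm_num : (0:ℝ) ≤ 2)
            apply Real.exp_le_exp.mpr
            linarith only [sq_nonneg (p - |x|/2), sq_abs x, hx2, h8]
        _ = (C₁ * Real.exp (-(s^2*N/(32*D^2)))) * Real.exp (-x^2/8) := by
            rw [Real.exp_add, Real.exp_add, hC₁def]; ring
        _ ≤ G * Real.exp (-x^2/8) := by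
            apply mul_le_mul_of_nonneg_right _ (Real.exp_pos _).le
            have h9 : 0 < 3*L*D*N^(-(1/2):ℝ) :=
              mul_pos (mul_pos (by linarith only [hL] : (0:ℝ) < 3*L) hD) hrNpos
            rw [hGdef]; linarith only [h9]
  -- continuity and integrability
  set φc := (2 * Real.pi) ^ (-(1/2) : ℝ) with hφcdef
  have hφc0 : 0 < φc := Real.rpow_pos_of_pos (by positivity) _
  have hφc1 : φc ≤ 1 :=
    Real.rpow_le_one_of_one_le_of_nonpos (by linarith only [Real.pi_gt_three]) (by norm_num)
  have hcont_f : Continuous (fun x : ℝ => (s + x*δ)^p) := by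
    apply Continuous.rpow_const (by continuity)
    exact fun x => Or.inr hp.le
  have hcont_e : Continuous (fun x : ℝ => Real.exp (-x^2/2)) := by
    apply Real.continuous_exp.comp; continuity
  have hcont_e8 : Continuous (fun x : ℝ => Real.exp (-x^2/8)) := by
    apply Real.continuous_exp.comp; continuity
  have hi1 : IntervalIntegrable
      (fun x => (s + x*δ)^p * (φc * Real.exp (-x^2/2))) volume (ℓ n) (u n) :=
    (hcont_f.mul (continuous_const.mul hcont_e)).intervalIntegrable _ _
  have hi2 : IntervalIntegrable
      (fun x => s^p * (φc * Real.exp (-x^2/2))) volume (ℓ n) (u n) :=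
    (continuous_const.mul (continuous_const.mul hcont_e)).intervalIntegrable _ _
  have hint2 : Integrable (fun x : ℝ => Real.exp (-x^2/2)) :=
    glh_integrable_exp_sq (by norm_num)
  have hint8 : Integrable (fun x : ℝ => Real.exp (-x^2/8)) :=
    glh_integrable_exp_sq (by norm_num)
  -- first piece
  have h1 : |∫ x in (ℓ n)..(u n), ((s + x*δ)^p - s^p) * (φc * Real.exp (-x^2/2))|
      ≤ 6 * G := by
    have hptw : ∀ x ∈ Set.Icc (ℓ n) (u n),
        |((s + x*δ)^p - s^p) * (φc * Real.exp (-x^2/2))| ≤ G * Real.exp (-x^2/8) := by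
      intro x hx
      rw [abs_mul, abs_of_nonneg (mul_nonneg hφc0.le (Real.exp_pos _).le : (0:ℝ) ≤ φc * Real.exp (-x^2/2))]
      calc |(s + x*δ)^p - s^p| * (φc * Real.exp (-x^2/2))
          = φc * (|(s + x*δ)^p - s^p| * Real.exp (-x^2/2)) := by ring
        _ ≤ φc * (G * Real.exp (-x^2/8)) :=
            mul_le_mul_of_nonneg_left (hmaster x hx) hφc0.le
        _ ≤ 1 * (G * Real.exp (-x^2/8)) :=
            mul_le_mul_of_nonneg_right hφc1 (mul_nonneg hG.le (Real.exp_pos _).le)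
        _ = G * Real.exp (-x^2/8) := one_mul _
    calc |∫ x in (ℓ n)..(u n), ((s + x*δ)^p - s^p) * (φc * Real.exp (-x^2/2))|
        ≤ ∫ x in (ℓ n)..(u n), |((s + x*δ)^p - s^p) * (φc * Real.exp (-x^2/2))| :=
          intervalIntegral.abs_integral_le_integral_abs hlu
      _ ≤ ∫ x in (ℓ n)..(u n), G * Real.exp (-x^2/8) := by
          apply intervalIntegral.integral_mono_on hlu _ _ hptw
          · exact (((hcont_f.sub continuous_const).mul
              (continuous_const.mul hcont_e)).abs).intervalIntegrable _ _
          · exact (continuous_const.mul hcont_e8).intervalIntegrable _ _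
      _ = G * ∫ x in (ℓ n)..(u n), Real.exp (-x^2/8) := by
          rw [intervalIntegral.integral_const_mul]
      _ ≤ G * 6 := by
          apply mul_le_mul_of_nonneg_left _ hG.le
          calc (∫ x in (ℓ n)..(u n), Real.exp (-x^2/8))
              ≤ ∫ x : ℝ, Real.exp (-x^2/8) := by
                rw [intervalIntegral.integral_of_le hlu]
                apply setIntegral_le_integral hint8
                filter_upwards with x using (Real.exp_pos _).le
            _ ≤ 6 := glh_integral_exp_eighth_le
      _ = 6 * G := by ring
  -- second piece
  have htail1 : (∫ x in Set.Iic (ℓ n), Real.exp (-x^2/2)) ≤ 4 * Real.exp (-(c^2*N)/4) := by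
    have h := glh_gauss_tail (S := Set.Iic (ℓ n)) measurableSet_Iic (T := c*Real.sqrt N)
      (fun x hx => by
        have hx' : x ≤ ℓ n := hx
        have h1 : c*Real.sqrt N ≤ -x := by linarith only [hx', hℓ]
        have h2 := mul_self_le_mul_self hcb.le h1
        linarith only [h2])
    rwa [show (c*Real.sqrt N)^2 = c^2*N from by rw [mul_pow, Real.sq_sqrt hN0.le]] at h
  have htail2 : (∫ x in Set.Ioi (u n), Real.exp (-x^2/2)) ≤ 4 * Real.exp (-(c^2*N)/4) := by
    have h := glh_gauss_tail (S := Set.Ioi (u n)) measurableSet_Ioi (T := c*Real.sqrt N)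
      (fun x hx => by
        have hx' : u n < x := hx
        have h1 : c*Real.sqrt N ≤ x := by linarith only [hx', hu]
        have h2 := mul_self_le_mul_self hcb.le h1
        linarith only [h2])
    rwa [show (c*Real.sqrt N)^2 = c^2*N from by rw [mul_pow, Real.sq_sqrt hN0.le]] at h
  have htail1' : 0 ≤ ∫ x in Set.Iic (ℓ n), Real.exp (-x^2/2) :=
    setIntegral_nonneg measurableSet_Iic (fun x _ => (Real.exp_pos _).le)
  have htail2' : 0 ≤ ∫ x in Set.Ioi (u n), Real.exp (-x^2/2) :=
    setIntegral_nonneg measurableSet_Ioi (fun x _ => (Real.exp_pos _).le)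
  have h2 : |(∫ x in (ℓ n)..(u n), s^p * (φc * Real.exp (-x^2/2))) - s^p|
      ≤ 8 * s^p * Real.exp (-(c^2*N)/4) := by
    have hIl : IntegrableOn (fun x : ℝ => Real.exp (-x^2/2)) (Set.Iic (ℓ n)) :=
      hint2.integrableOn
    have hIu : IntegrableOn (fun x : ℝ => Real.exp (-x^2/2)) (Set.Iic (u n)) :=
      hint2.integrableOn
    have hIo : IntegrableOn (fun x : ℝ => Real.exp (-x^2/2)) (Set.Ioi (u n)) :=
      hint2.integrableOn
    have hIsub : (∫ x in (ℓ n)..(u n), Real.exp (-x^2/2))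
        = (∫ x in Set.Iic (u n), Real.exp (-x^2/2))
          - (∫ x in Set.Iic (ℓ n), Real.exp (-x^2/2)) :=
      (intervalIntegral.integral_Iic_sub_Iic hIl hIu).symm
    have hIadd : (∫ x in Set.Iic (u n), Real.exp (-x^2/2))
          + (∫ x in Set.Ioi (u n), Real.exp (-x^2/2))
        = ∫ x : ℝ, Real.exp (-x^2/2) := intervalIntegral.integral_Iic_add_Ioi hIu hIo
    have htot : (∫ x : ℝ, Real.exp (-x^2/2)) = Real.sqrt (Real.pi * 2) :=
      glh_integral_exp_sq (by norm_num)
    have hφtot : φc * Real.sqrt (Real.pi * 2) = 1 := by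
      rw [hφcdef, show Real.pi * 2 = 2*Real.pi by ring, Real.sqrt_eq_rpow,
        ← Real.rpow_add (by positivity)]
      norm_num
    have hconst : (∫ x in (ℓ n)..(u n), s^p * (φc * Real.exp (-x^2/2)))
        = (s^p * φc) * ∫ x in (ℓ n)..(u n), Real.exp (-x^2/2) := by
      rw [← intervalIntegral.integral_const_mul]
      apply intervalIntegral.integral_congr
      intro x _; ring
    rw [hconst, hIsub]
    have key : (s^p * φc) * ((∫ x in Set.Iic (u n), Real.exp (-x^2/2))
          - (∫ x in Set.Iic (ℓ n), Real.exp (-x^2/2))) - s^p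
        = -((s^p * φc) * ((∫ x in Set.Ioi (u n), Real.exp (-x^2/2))
          + (∫ x in Set.Iic (ℓ n), Real.exp (-x^2/2)))) := by
      have e : (∫ x in Set.Iic (u n), Real.exp (-x^2/2))
            + (∫ x in Set.Ioi (u n), Real.exp (-x^2/2)) = Real.sqrt (Real.pi * 2) := by
        rw [hIadd, htot]
      have e2 : φc * ((∫ x in Set.Iic (u n), Real.exp (-x^2/2))
            + (∫ x in Set.Ioi (u n), Real.exp (-x^2/2))) = 1 := by
        rw [e]; exact hφtot
      linear_combination (s^p) * e2
    rw [key, abs_neg, abs_of_nonneg (mul_nonneg (mul_nonneg hsp.le hφc0.le) (by linarith only [htail1', htail2']))]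
    calc (s^p * φc) * ((∫ x in Set.Ioi (u n), Real.exp (-x^2/2))
          + (∫ x in Set.Iic (ℓ n), Real.exp (-x^2/2)))
        ≤ (s^p * 1) * (4 * Real.exp (-(c^2*N)/4) + 4 * Real.exp (-(c^2*N)/4)) := by
          apply mul_le_mul (mul_le_mul_of_nonneg_left hφc1 hsp.le)
            (by linarith only [htail1, htail2]) (by linarith only [htail1', htail2'])
            (mul_nonneg hsp.le zero_le_one)
      _ = 8 * s^p * Real.exp (-(c^2*N)/4) := by ring
  -- split the integral
  have hsplit : (∫ x in (ℓ n)..(u n), (s + x*δ)^p * (φc * Real.exp (-x^2/2))) - s^p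
      = (∫ x in (ℓ n)..(u n), ((s + x*δ)^p - s^p) * (φc * Real.exp (-x^2/2)))
        + ((∫ x in (ℓ n)..(u n), s^p * (φc * Real.exp (-x^2/2))) - s^p) := by
    have e1 : (∫ x in (ℓ n)..(u n), ((s + x*δ)^p - s^p) * (φc * Real.exp (-x^2/2)))
        = (∫ x in (ℓ n)..(u n), (s + x*δ)^p * (φc * Real.exp (-x^2/2)))
          - ∫ x in (ℓ n)..(u n), s^p * (φc * Real.exp (-x^2/2)) := by
      rw [← intervalIntegral.integral_sub hi1 hi2]
      apply intervalIntegral.integral_congr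
      intro x _; ring
    rw [e1]; ring
  -- decay bounds
  have hNN : 1/N ≤ N^(-(1/2):ℝ) := by
    rw [show (1:ℝ)/N = N^(-1:ℝ) by rw [Real.rpow_neg_one, one_div]]
    exact Real.rpow_le_rpow_of_exponent_le hN1 (by norm_num)
  have he1 : Real.exp (-(s^2*N/(32*D^2))) ≤ (32*D^2/s^2) * N^(-(1/2):ℝ) := by
    have ht : 0 < s^2*N/(32*D^2) := div_pos (mul_pos (pow_pos hs0 2) hN0) (by linarith only [pow_pos hD 2])
    calc Real.exp (-(s^2*N/(32*D^2))) ≤ 1/(s^2*N/(32*D^2)) := glh_exp_neg_le_inv ht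
      _ = (32*D^2/s^2) * (1/N) := by field_simp
      _ ≤ (32*D^2/s^2) * N^(-(1/2):ℝ) :=
          mul_le_mul_of_nonneg_left hNN (by positivity)
  have he2 : Real.exp (-(c^2*N)/4) ≤ (4/c^2) * N^(-(1/2):ℝ) := by
    have ht : 0 < c^2*N/4 := div_pos (mul_pos (pow_pos hc 2) hN0) (by norm_num)
    calc Real.exp (-(c^2*N)/4) = Real.exp (-(c^2*N/4)) := by ring_nf
      _ ≤ 1/(c^2*N/4) := glh_exp_neg_le_inv ht
      _ = (4/c^2) * (1/N) := by field_simp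
      _ ≤ (4/c^2) * N^(-(1/2):ℝ) := mul_le_mul_of_nonneg_left hNN (by positivity)
  -- assemble
  rw [hsplit]
  have hb1 : 6 * G ≤ 18*L*D*N^(-(1/2):ℝ) + 6*C₁*((32*D^2/s^2) * N^(-(1/2):ℝ)) := by
    rw [hGdef]
    have h9 := mul_le_mul_of_nonneg_left he1 (by linarith only [hC₁] : (0:ℝ) ≤ 6*C₁)
    linarith only [h9]
  have hb2 : 8 * s^p * Real.exp (-(c^2*N)/4) ≤ 8*s^p*((4/c^2) * N^(-(1/2):ℝ)) :=
    mul_le_mul_of_nonneg_left he2 (by linarith only [hsp])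
  calc |(∫ x in (ℓ n)..(u n), ((s + x*δ)^p - s^p) * (φc * Real.exp (-x^2/2)))
        + ((∫ x in (ℓ n)..(u n), s^p * (φc * Real.exp (-x^2/2))) - s^p)|
      ≤ |∫ x in (ℓ n)..(u n), ((s + x*δ)^p - s^p) * (φc * Real.exp (-x^2/2))|
        + |(∫ x in (ℓ n)..(u n), s^p * (φc * Real.exp (-x^2/2))) - s^p| := abs_add_le _ _
    _ ≤ 6*G + 8 * s^p * Real.exp (-(c^2*N)/4) := add_le_add h1 h2
    _ ≤ 18*L*D*N^(-(1/2):ℝ) + 6*C₁*((32*D^2/s^2) * N^(-(1/2):ℝ))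
        + 8*s^p*((4/c^2) * N^(-(1/2):ℝ)) := by linarith only [hb1, hb2]
    _ = (18*L*D + 6*C₁*(32*D^2/s^2) + 32*(s^p)/c^2) * N^(-(1/2):ℝ) := by ring
    _ ≤ (18*L*D + 6*C₁*(32*D^2/s^2) + 32*(s^p)/c^2 + 1) * N^(-(1/2):ℝ) := by
        apply mul_le_mul_of_nonneg_right _ hrNpos.le
        linarith only []
end

section
/- Fix α, ρ ∈ (−∞,1) \ {0}, ξ ∈ ℝ, δ > 0, an integer m ≥ 1, survival probabilities s_j ∈ (0,1) for 0 ≤ j < m, and a terminal value ζ > 0. Define, for each integer n ≥ 1 and for n = ∞, numbers z_{n,j} > 0 for 0 ≤ j ≤ m by backward recursion: z_{n,m} = ζ for all n (including n = ∞); for finite n and j < m, θ_{n,j} := e^{ξδ}·(Σ_{i=1}^{n} (i/n)^{1−α} · C(n,i) s_j^i (1−s_j)^{n−i} · z_{i,j+1}^{α})^{1/α} and z_{n,j} := (1 + θ_{n,j}^{ρ/(1−ρ)})^{(1−ρ)/ρ}; for n = ∞ and j < m, θ_{∞,j} := e^{ξδ}·s_j^{1/α − 1}·z_{∞,j+1}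 and z_{∞,j} := (1 + θ_{∞,j}^{ρ/(1−ρ)})^{(1−ρ)/ρ}. Then for each j with 0 ≤ j ≤ m there exists a constant K_j > 0 such that for all integers n ≥ 1, |z_{n,j} − z_{∞,j}| ≤ K_j·n^{−1/2}. -/
/-!
Backward induction on `j` proves `z_{n,j} - z_{∞,j} = O(n^{-1/2})`. Both values are the same smooth
map `x ↦ (1 + (e^{ξδ} x^{1/α})^{ρ/(1-ρ)})^{(1-ρ)/ρ}` applied to `S_n = E[(I/n)^{1-α} z_{I,j+1}^α]`,
`I ~ Bin(n, s_j)`, respectively to its limit `S_∞ = s_j^{1-α} z_{∞,j+1}^α > 0`, so by differentiability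
at `S_∞` it suffices that `S_n - S_∞ = O(n^{-1/2})`. Split `S_n - S_∞` into
`E[(I/n)^{1-α} (z_{I,j+1}^α - z_{∞,j+1}^α)]`, bounded via the induction hypothesis by a multiple of
`E[I^{-1/2}; I ≥ 1] = O(n^{-1/2})` (Chebyshev), and `z_{∞,j+1}^α (E[(I/n)^{1-α}] - s_j^{1-α})`,
bounded by a multiple of `E|I/n - s_j| ≤ (s_j(1-s_j)/n)^{1/2}` because `x^{1-α}` is differentiable at
`s_j` and bounded on `[0, 1]`.
-/

open Asymptotics Filter Topology Finset

section Asymptotics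

variable {E F G : Type*} [NormedAddCommGroup E] [NormedSpace ℝ E]
  [NormedAddCommGroup F] [NormedSpace ℝ F] [NormedAddCommGroup G]

theorem DifferentiableAt.isBigO_comp_sub {ι : Type*} {f : E → F} {x₀ : E}
    (hf : DifferentiableAt ℝ f x₀) {l : Filter ι} {x : ι → E} {g : ι → G}
    (hx : (fun i => x i - x₀) =O[l] g) (hg : Tendsto g l (𝓝 0)) :
    (fun i => f (x i) - f x₀) =O[l] g :=
  (hf.hasFDerivAt.isBigO_sub.comp_tendsto
    (tendsto_sub_nhds_zero_iff.1 (hx.trans_tendsto hg))).trans hx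

theorem DifferentiableAt.exists_norm_sub_le_of_bounded {f : E → F} {x₀ : E}
    (hf : DifferentiableAt ℝ f x₀) {A : Set E} {M : ℝ} (hM : ∀ x ∈ A, ‖f x‖ ≤ M) :
    ∃ L, 0 ≤ L ∧ ∀ x ∈ A, ‖f x - f x₀‖ ≤ L * ‖x - x₀‖ := by
  obtain ⟨c, hc⟩ := hf.hasFDerivAt.isBigO_sub.bound
  obtain ⟨ε, hε, hnear⟩ := Metric.eventually_nhds_iff.1 hc
  refine ⟨max c 0 + (max M 0 + ‖f x₀‖) / ε, by positivity, fun x hx => ?_⟩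
  rcases lt_or_ge ‖x - x₀‖ ε with hxε | hxε
  · calc ‖f x - f x₀‖ ≤ c * ‖x - x₀‖ := by simpa using hnear (by rwa [dist_eq_norm])
      _ ≤ (max c 0 + (max M 0 + ‖f x₀‖) / ε) * ‖x - x₀‖ := by
        gcongr
        exact (le_max_left c 0).trans (le_add_of_nonneg_right (by positivity))
  · calc ‖f x - f x₀‖ ≤ max M 0 + ‖f x₀‖ :=
          (norm_sub_le _ _).trans (by gcongr; exact (hM x hx).trans (le_max_left M 0))
      _ = (max M 0 + ‖f x₀‖) / ε * ε := by field_simp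
      _ ≤ (max c 0 + (max M 0 + ‖f x₀‖) / ε) * ‖x - x₀‖ := by
        gcongr
        exact le_add_of_nonneg_left (le_max_right c 0)

end Asymptotics

theorem Asymptotics.IsBigO.exists_pos_forall_norm_le {F G : Type*} [NormedAddCommGroup F]
    [NormedAddCommGroup G] {f : ℕ → F} {g : ℕ → G}
    (h : f =O[atTop] g) (hg : ∀ n, 1 ≤ n → g n ≠ 0) :
    ∃ K, 0 < K ∧ ∀ n, 1 ≤ n → ‖f n‖ ≤ K * ‖g n‖ := by
  have hshift : (fun n => f (n + 1)) =O[cofinite] (fun n => g (n + 1)) := by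
    rw [Nat.cofinite_eq_atTop]
    exact h.comp_tendsto (tendsto_add_atTop_nat 1)
  obtain ⟨C, hC⟩ :=
    (isBigO_cofinite_iff fun n hn => absurd hn (hg (n + 1) n.succ_pos)).1 hshift
  refine ⟨max C 1, one_pos.trans_le (le_max_right C 1), fun n hn => ?_⟩
  obtain ⟨k, rfl⟩ := Nat.exists_eq_add_of_le' hn
  exact (hC k).trans (by gcongr; exact le_max_left C 1)

noncomputable def binomProb (n : ℕ) (s : ℝ) (i : ℕ) : ℝ :=
  n.choose i * s ^ i * (1 - s) ^ (n - i)

section Binomial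

variable {n : ℕ} {s : ℝ}

theorem eval_bernsteinPolynomial (n i : ℕ) (s : ℝ) :
    (bernsteinPolynomial ℝ n i).eval s = binomProb n s i := by
  simp [bernsteinPolynomial, binomProb]

theorem binomProb_nonneg (hs0 : 0 ≤ s) (hs1 : s ≤ 1) (i : ℕ) : 0 ≤ binomProb n s i := by
  have : 0 ≤ 1 - s := sub_nonneg.2 hs1
  unfold binomProb; positivity

theorem sum_binomProb (n : ℕ) (s : ℝ) : ∑ i ∈ range (n + 1), binomProb n s i = 1 := by
  simpa only [Polynomial.eval_finsetSum, eval_bernsteinPolynomial, Polynomial.eval_one] using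
    congrArg (Polynomial.eval s) (bernsteinPolynomial.sum ℝ n)

theorem sum_binomProb_mul_sq_sub (hn : n ≠ 0) (s : ℝ) :
    ∑ i ∈ range (n + 1), binomProb n s i * ((i : ℝ) / n - s) ^ 2 = s * (1 - s) / n := by
  have hvar := congrArg (Polynomial.eval s) (bernsteinPolynomial.variance ℝ n)
  simp only [Polynomial.eval_finsetSum, Polynomial.eval_mul, Polynomial.eval_pow,
    Polynomial.eval_sub, Polynomial.eval_X, Polynomial.eval_natCast,
    Polynomial.eval_one, nsmul_eq_mul, eval_bernsteinPolynomial] at hvar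
  have hn' : (n : ℝ) ≠ 0 := Nat.cast_ne_zero.2 hn
  calc ∑ i ∈ range (n + 1), binomProb n s i * ((i : ℝ) / n - s) ^ 2
      = (∑ i ∈ range (n + 1), ((n : ℝ) * s - i) ^ 2 * binomProb n s i) / (n : ℝ) ^ 2 := by
        rw [sum_div]
        refine sum_congr rfl fun i _ => ?_
        field_simp
        ring
    _ = s * (1 - s) / n := by rw [hvar]; field_simp

theorem sum_binomProb_mul_abs_sub_le (hn : n ≠ 0) (hs0 : 0 ≤ s) (hs1 : s ≤ 1) :
    ∑ i ∈ range (n + 1), binomProb n s i * |(i : ℝ) / n - s| ≤ (n : ℝ) ^ (-(1 / 2) : ℝ) := by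
  have hp := binomProb_nonneg (n := n) hs0 hs1
  have hjensen := Real.pow_arith_mean_le_arith_mean_pow (range (n + 1)) (binomProb n s)
    (fun i => |(i : ℝ) / n - s|) (fun i _ => hp i) (sum_binomProb n s) (fun i _ => abs_nonneg _) 2
  simp only [sq_abs, sum_binomProb_mul_sq_sub hn] at hjensen
  rw [Real.rpow_neg (Nat.cast_nonneg n), ← Real.sqrt_eq_rpow, ← Real.sqrt_inv]
  refine Real.le_sqrt_of_sq_le (hjensen.trans ?_)
  rw [div_eq_mul_inv]
  exact mul_le_of_le_one_left (inv_nonneg.2 (Nat.cast_nonneg n)) (by nlinarith)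

end Binomial

-- Summed against `binomProb n s`, the right side is `O(n^{-1/2})` by the variance identity.
theorem rpow_neg_half_le_of_one_le {x y s : ℝ} (hs : 0 < s) (hx : 1 ≤ x) (hy : 1 ≤ y) :
    x ^ (-(1 / 2) : ℝ) ≤
      y ^ (-(1 / 2) : ℝ) * ((s / 2) ^ (-(1 / 2) : ℝ) + 4 / s ^ 2 * y * (x / y - s) ^ 2) := by
  have hy0 : 0 < y := one_pos.trans_le hy
  rcases le_or_gt (y * s / 2) x with hbig | hsmall
  · calc x ^ (-(1 / 2) : ℝ) ≤ (y * (s / 2)) ^ (-(1 / 2) : ℝ) :=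
          Real.rpow_le_rpow_of_nonpos (by positivity) (by linarith) (by norm_num)
      _ = y ^ (-(1 / 2) : ℝ) * (s / 2) ^ (-(1 / 2) : ℝ) :=
          Real.mul_rpow hy0.le (by positivity)
      _ ≤ _ := by gcongr; exact le_add_of_nonneg_right (by positivity)
  · have hgap : s / 2 ≤ s - x / y := by
      rw [le_sub_comm, div_le_iff₀ hy0]; linarith
    have hfar : y ≤ 4 / s ^ 2 * y * (x / y - s) ^ 2 := by
      have : s ^ 2 / 4 ≤ (x / y - s) ^ 2 := by nlinarith
      calc y = 4 / s ^ 2 * y * (s ^ 2 / 4) := by field_simp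
        _ ≤ _ := by gcongr
    calc x ^ (-(1 / 2) : ℝ) ≤ 1 := Real.rpow_le_one_of_one_le_of_nonpos hx (by norm_num)
      _ ≤ y ^ (1 / 2 : ℝ) := Real.one_le_rpow hy (by norm_num)
      _ = y ^ (-(1 / 2) : ℝ) * y := by
          rw [← Real.rpow_add_one hy0.ne']; norm_num
      _ ≤ _ := by gcongr; exact le_add_of_nonneg_left (by positivity) |>.trans' hfar

theorem sum_binomProb_mul_rpow_neg_half_le {n : ℕ} {s : ℝ} (hn : n ≠ 0) (hs0 : 0 < s)
    (hs1 : s ≤ 1) :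
    ∑ i ∈ Icc 1 n, binomProb n s i * (i : ℝ) ^ (-(1 / 2) : ℝ) ≤
      ((s / 2) ^ (-(1 / 2) : ℝ) + 4 / s) * (n : ℝ) ^ (-(1 / 2) : ℝ) := by
  have hp := binomProb_nonneg (n := n) hs0.le hs1
  have hn1 : (1 : ℝ) ≤ n := Nat.one_le_cast.2 (Nat.one_le_iff_ne_zero.2 hn)
  set A := (s / 2) ^ (-(1 / 2) : ℝ)
  have hA : 0 ≤ A := by positivity
  calc ∑ i ∈ Icc 1 n, binomProb n s i * (i : ℝ) ^ (-(1 / 2) : ℝ)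
      ≤ ∑ i ∈ Icc 1 n, binomProb n s i *
          ((n : ℝ) ^ (-(1 / 2) : ℝ) * (A + 4 / s ^ 2 * n * ((i : ℝ) / n - s) ^ 2)) := by
        refine sum_le_sum fun i hi => mul_le_mul_of_nonneg_left ?_ (hp i)
        exact rpow_neg_half_le_of_one_le hs0 (Nat.one_le_cast.2 (mem_Icc.1 hi).1) hn1
    _ ≤ ∑ i ∈ range (n + 1), binomProb n s i *
          ((n : ℝ) ^ (-(1 / 2) : ℝ) * (A + 4 / s ^ 2 * n * ((i : ℝ) / n - s) ^ 2)) := by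
        refine sum_le_sum_of_subset_of_nonneg (fun i hi => ?_) fun i _ _ => ?_
        · simpa [Nat.lt_succ_iff] using (mem_Icc.1 hi).2
        · have := hp i; positivity
    _ = (A + 4 / s ^ 2 * n * (s * (1 - s) / n)) * (n : ℝ) ^ (-(1 / 2) : ℝ) := by
        simp only [fun i : ℕ => show binomProb n s i *
            ((n : ℝ) ^ (-(1 / 2) : ℝ) * (A + 4 / s ^ 2 * n * ((i : ℝ) / n - s) ^ 2)) =
            (n : ℝ) ^ (-(1 / 2) : ℝ) * A * binomProb n s i +
              (n : ℝ) ^ (-(1 / 2) : ℝ) * (4 / s ^ 2 * n) * (binomProb n s i * ((i : ℝ) / n - s) ^ 2)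
            by ring]
        rw [sum_add_distrib, ← mul_sum, ← mul_sum, sum_binomProb, sum_binomProb_mul_sq_sub hn]
        ring
    _ ≤ (A + 4 / s) * (n : ℝ) ^ (-(1 / 2) : ℝ) := by
        rw [show 4 / s ^ 2 * n * (s * (1 - s) / n) = 4 * (1 - s) / s by field_simp]
        gcongr
        linarith

theorem exists_abs_sum_binomProb_mul_sub_le {f : ℝ → ℝ} {s M : ℝ} (hs0 : 0 ≤ s) (hs1 : s ≤ 1)
    (hf : DifferentiableAt ℝ f s) (hM : ∀ x ∈ Set.Icc (0 : ℝ) 1, |f x| ≤ M) :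
    ∃ L, 0 ≤ L ∧ ∀ n : ℕ, n ≠ 0 →
      |∑ i ∈ range (n + 1), binomProb n s i * f (i / n) - f s| ≤ L * (n : ℝ) ^ (-(1 / 2) : ℝ) := by
  obtain ⟨L, hL, hlip⟩ := hf.exists_norm_sub_le_of_bounded hM
  refine ⟨L, hL, fun n hn => ?_⟩
  have hp := binomProb_nonneg (n := n) hs0 hs1
  have hgrid : ∀ i ∈ range (n + 1), (i : ℝ) / n ∈ Set.Icc (0 : ℝ) 1 := fun i hi =>
    ⟨by positivity, div_le_one_of_le₀ (Nat.cast_le.2 (mem_range_succ_iff.1 hi)) (Nat.cast_nonneg n)⟩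
  calc |∑ i ∈ range (n + 1), binomProb n s i * f (i / n) - f s|
      = |∑ i ∈ range (n + 1), binomProb n s i * (f (i / n) - f s)| := by
        simp only [mul_sub, sum_sub_distrib, ← sum_mul, sum_binomProb, one_mul]
    _ ≤ ∑ i ∈ range (n + 1), binomProb n s i * (L * |(i : ℝ) / n - s|) := by
        refine (abs_sum_le_sum_abs _ _).trans (sum_le_sum fun i hi => ?_)
        rw [abs_mul, abs_of_nonneg (hp i)]
        exact mul_le_mul_of_nonneg_left (hlip _ (hgrid i hi)) (hp i)
    _ = L * ∑ i ∈ range (n + 1), binomProb n s i * |(i : ℝ) / n - s| := by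
        rw [mul_sum]; exact sum_congr rfl fun i _ => by ring
    _ ≤ L * (n : ℝ) ^ (-(1 / 2) : ℝ) := by
        gcongr; exact sum_binomProb_mul_abs_sub_le hn hs0 hs1

theorem abs_sum_binomProb_mul_rpow_mul_sub_le {n : ℕ} {p s c K : ℝ} {v : ℕ → ℝ} (hn : n ≠ 0)
    (hp : 0 ≤ p) (hs0 : 0 < s) (hs1 : s ≤ 1) (hK : 0 ≤ K)
    (hv : ∀ i, 1 ≤ i → |v i - c| ≤ K * (i : ℝ) ^ (-(1 / 2) : ℝ)) :
    |∑ i ∈ Icc 1 n, binomProb n s i * (((i : ℝ) / n) ^ p * (v i - c))| ≤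
      K * ((s / 2) ^ (-(1 / 2) : ℝ) + 4 / s) * (n : ℝ) ^ (-(1 / 2) : ℝ) := by
  have hprob := binomProb_nonneg (n := n) hs0.le hs1
  calc |∑ i ∈ Icc 1 n, binomProb n s i * (((i : ℝ) / n) ^ p * (v i - c))|
      ≤ ∑ i ∈ Icc 1 n, binomProb n s i * (K * (i : ℝ) ^ (-(1 / 2) : ℝ)) := by
        refine (abs_sum_le_sum_abs _ _).trans (sum_le_sum fun i hi => ?_)
        obtain ⟨hi1, hin⟩ := mem_Icc.1 hi
        have hratio : (i : ℝ) / n ≤ 1 := div_le_one_of_le₀ (Nat.cast_le.2 hin) (Nat.cast_nonneg n)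
        rw [abs_mul, abs_mul, abs_of_nonneg (hprob i), abs_of_nonneg (by positivity)]
        refine mul_le_mul_of_nonneg_left ?_ (hprob i)
        exact (mul_le_of_le_one_left (abs_nonneg _)
          (Real.rpow_le_one (by positivity) hratio hp)).trans (hv i hi1)
    _ = K * ∑ i ∈ Icc 1 n, binomProb n s i * (i : ℝ) ^ (-(1 / 2) : ℝ) := by
        rw [mul_sum]; exact sum_congr rfl fun i _ => by ring
    _ ≤ K * ((s / 2) ^ (-(1 / 2) : ℝ) + 4 / s) * (n : ℝ) ^ (-(1 / 2) : ℝ) := by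
        rw [mul_assoc]; gcongr; exact sum_binomProb_mul_rpow_neg_half_le hn hs0 hs1

/-- The expectation of `(I / n) ^ p * v I` over the binomial number `I ~ Bin(n, s)` of survivors,
the term `I = 0` being omitted. -/
noncomputable def survivorMean (p s : ℝ) (v : ℕ → ℝ) (n : ℕ) : ℝ :=
  ∑ i ∈ Icc 1 n, ((i : ℝ) / n) ^ p * n.choose i * s ^ i * (1 - s) ^ (n - i) * v i

theorem survivorMean_sub_eq {p : ℝ} (hp : p ≠ 0) (s c : ℝ) (v : ℕ → ℝ) (n : ℕ) :
    survivorMean p s v n - s ^ p * c =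
      ∑ i ∈ Icc 1 n, binomProb n s i * (((i : ℝ) / n) ^ p * (v i - c)) +
        c * (∑ i ∈ range (n + 1), binomProb n s i * ((i : ℝ) / n) ^ p - s ^ p) := by
  have hzero : ∑ i ∈ Icc 1 n, binomProb n s i * ((i : ℝ) / n) ^ p =
      ∑ i ∈ range (n + 1), binomProb n s i * ((i : ℝ) / n) ^ p := by
    refine sum_subset (fun i hi => mem_range_succ_iff.2 (mem_Icc.1 hi).2) fun i hi hi' => ?_
    obtain rfl : i = 0 := by simp only [mem_Icc, mem_range] at hi hi'; omega
    simp [Real.zero_rpow hp]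
  rw [← hzero, survivorMean, mul_sub, mul_sum, ← add_sub_assoc, ← sum_add_distrib]
  congr 1
  · exact sum_congr rfl fun i _ => by unfold binomProb; ring
  · ring

theorem survivorMean_sub_isBigO {p s c K : ℝ} {v : ℕ → ℝ} (hp : 0 < p)
    (hs : s ∈ Set.Ioo (0 : ℝ) 1) (hv : ∀ i, 1 ≤ i → |v i - c| ≤ K * (i : ℝ) ^ (-(1 / 2) : ℝ)) :
    (fun n => survivorMean p s v n - s ^ p * c) =O[atTop]
      (fun n : ℕ => (n : ℝ) ^ (-(1 / 2) : ℝ)) := by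
  obtain ⟨hs0, hs1⟩ := hs
  have hK : 0 ≤ K := by simpa using (abs_nonneg _).trans (hv 1 le_rfl)
  obtain ⟨L, -, hmean⟩ := exists_abs_sum_binomProb_mul_sub_le (f := (· ^ p)) (M := 1) hs0.le hs1.le
    (Real.differentiableAt_rpow_const_of_ne p hs0.ne') fun x hx => by
      rw [abs_of_nonneg (Real.rpow_nonneg hx.1 p)]; exact Real.rpow_le_one hx.1 hx.2 hp.le
  refine IsBigO.of_bound (K * ((s / 2) ^ (-(1 / 2) : ℝ) + 4 / s) + |c| * L) ?_
  filter_upwards [eventually_ne_atTop 0] with n hn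
  rw [survivorMean_sub_eq hp.ne', Real.norm_eq_abs, Real.norm_eq_abs,
    abs_of_nonneg (Real.rpow_nonneg (Nat.cast_nonneg n) _), add_mul]
  refine (abs_add_le _ _).trans (add_le_add ?_ ?_)
  · exact abs_sum_binomProb_mul_rpow_mul_sub_le hn hp.le hs0 hs1.le hK hv
  · rw [abs_mul, mul_assoc]; exact mul_le_mul_of_nonneg_left (hmean n hn) (abs_nonneg c)

theorem differentiableAt_one_add_mul_rpow_rpow_rpow {E a b c x : ℝ} (hE : 0 < E) (hx : 0 < x) :
    DifferentiableAt ℝ (fun y => (1 + (E * y ^ a) ^ b) ^ c) x := by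
  have hinner : DifferentiableAt ℝ (fun y => E * y ^ a) x :=
    (Real.differentiableAt_rpow_const_of_ne a hx.ne').const_mul E
  have hpos : 0 < E * x ^ a := mul_pos hE (Real.rpow_pos_of_pos hx a)
  exact ((hinner.rpow_const (Or.inl hpos.ne')).const_add 1).rpow_const (Or.inl (by positivity))

theorem rpow_one_sub_mul_rpow_rpow_one_div {s w α : ℝ} (hs : 0 ≤ s) (hw : 0 ≤ w) (hα : α ≠ 0) :
    (s ^ (1 - α) * w ^ α) ^ (1 / α) = s ^ (1 / α - 1) * w := by
  rw [Real.mul_rpow (Real.rpow_nonneg hs _) (Real.rpow_nonneg hw _), ← Real.rpow_mul hs,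
    ← Real.rpow_mul hw, mul_one_div_cancel hα, Real.rpow_one]
  congr 2
  field_simp

theorem finite_collective_value_convergence_general
    (α ρ ξ δ : ℝ) (hα1 : α < 1) (hα0 : α ≠ 0)
    (m : ℕ)
    (s : ℕ → ℝ) (hs : ∀ j < m, s j ∈ Set.Ioo (0:ℝ) 1)
    (ζ : ℝ)
    (z : ℕ → ℕ → ℝ) (zInf : ℕ → ℝ)
    (hzInfpos : ∀ j ≤ m, 0 < zInf j)
    (hzT : ∀ n, 1 ≤ n → z n m = ζ) (hzInfT : zInf m = ζ)
    (hzrec : ∀ n, 1 ≤ n → ∀ j < m,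
      z n j = (1 + (Real.exp (ξ * δ) *
        (∑ i ∈ Finset.Icc 1 n, ((i : ℝ) / (n : ℝ)) ^ (1 - α) * (n.choose i : ℝ)
            * (s j) ^ i * (1 - s j) ^ (n - i) * (z i (j+1)) ^ α) ^ (1/α)
        ) ^ (ρ/(1-ρ))) ^ ((1-ρ)/ρ))
    (hzInfrec : ∀ j < m,
      zInf j = (1 + (Real.exp (ξ * δ) * (s j) ^ (1/α - 1) * zInf (j+1))
        ^ (ρ/(1-ρ))) ^ ((1-ρ)/ρ)) :
    ∀ j ≤ m, ∃ K : ℝ, 0 < K ∧ ∀ n : ℕ, 1 ≤ n →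
      |z n j - zInf j| ≤ K * (n : ℝ) ^ (-(1/2) : ℝ) := by
  have hν : Tendsto (fun n : ℕ => (n : ℝ) ^ (-(1 / 2) : ℝ)) atTop (𝓝 0) :=
    (tendsto_rpow_neg_atTop (by norm_num)).comp tendsto_natCast_atTop_atTop
  have hνpos : ∀ n : ℕ, 1 ≤ n → 0 < (n : ℝ) ^ (-(1 / 2) : ℝ) := fun n hn =>
    Real.rpow_pos_of_pos (Nat.cast_pos.2 hn) _
  suffices H : ∀ j ≤ m,
      (fun n => z n j - zInf j) =O[atTop] fun n : ℕ => (n : ℝ) ^ (-(1 / 2) : ℝ) by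
    intro j hj
    obtain ⟨K, hK, hbound⟩ := (H j hj).exists_pos_forall_norm_le fun n hn => (hνpos n hn).ne'
    refine ⟨K, hK, fun n hn => ?_⟩
    simpa only [Real.norm_eq_abs, abs_of_pos (hνpos n hn)] using hbound n hn
  intro j hj
  induction hj using Nat.decreasingInduction with
  | self =>
    refine (isBigO_zero _ _).congr' ?_ EventuallyEq.rfl
    filter_upwards [eventually_ge_atTop 1] with n hn
    rw [hzT n hn, hzInfT, sub_self]
  | of_succ j hj ih =>
    obtain ⟨hs0, -⟩ := hs j hj
    have hw := hzInfpos (j + 1) hj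
    obtain ⟨K, -, hK⟩ := ((Real.differentiableAt_rpow_const_of_ne α hw.ne').isBigO_comp_sub
      ih hν).exists_pos_forall_norm_le fun n hn => (hνpos n hn).ne'
    have hS := survivorMean_sub_isBigO (v := fun i => z i (j + 1) ^ α) (sub_pos.2 hα1) (hs j hj)
      fun i hi => by simpa only [Real.norm_eq_abs, abs_of_pos (hνpos i hi)] using hK i hi
    have hS₀ : 0 < s j ^ (1 - α) * zInf (j + 1) ^ α := by positivity
    have hF := (differentiableAt_one_add_mul_rpow_rpow_rpow (a := 1 / α) (b := ρ / (1 - ρ))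
      (c := (1 - ρ) / ρ) (Real.exp_pos (ξ * δ)) hS₀).isBigO_comp_sub hS hν
    refine hF.congr' ?_ EventuallyEq.rfl
    filter_upwards [eventually_ge_atTop 1] with n hn
    rw [hzrec n hn j hj, hzInfrec j hj, mul_assoc,
      ← rpow_one_sub_mul_rpow_rpow_one_div hs0.le hw.le hα0]
    rfl

/-- Convergence of the finite-collective Epstein–Zin value function to the
infinite-collective value at rate `n^{−1/2}`: with the backward recursions
`z_{n,m} = ζ`, `θ_{n,j} = e^{ξδ} (Σ_{i=1}^n (i/n)^{1−α} C(n,i) s_j^i (1−s_j)^{n−i} z_{i,j+1}^α)^{1/α}`,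
`z_{n,j} = (1 + θ_{n,j}^{ρ/(1−ρ)})^{(1−ρ)/ρ}`, and
`z_{∞,j} = (1 + (e^{ξδ} s_j^{1/α−1} z_{∞,j+1})^{ρ/(1−ρ)})^{(1−ρ)/ρ}`,
for each `j ≤ m` there is `K_j > 0` with `|z_{n,j} − z_{∞,j}| ≤ K_j n^{−1/2}` for all `n ≥ 1`. -/
theorem finite_collective_value_convergence
    (α ρ ξ δ : ℝ) (hα1 : α < 1) (hα0 : α ≠ 0) (hρ1 : ρ < 1) (hρ0 : ρ ≠ 0)
    (hδ : 0 < δ) (m : ℕ) (hm : 1 ≤ m)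
    (s : ℕ → ℝ) (hs : ∀ j < m, s j ∈ Set.Ioo (0:ℝ) 1)
    (ζ : ℝ) (hζ : 0 < ζ)
    (z : ℕ → ℕ → ℝ) (zInf : ℕ → ℝ)
    (hzpos : ∀ n, 1 ≤ n → ∀ j ≤ m, 0 < z n j)
    (hzInfpos : ∀ j ≤ m, 0 < zInf j)
    (hzT : ∀ n, 1 ≤ n → z n m = ζ) (hzInfT : zInf m = ζ)
    (hzrec : ∀ n, 1 ≤ n → ∀ j < m,
      z n j = (1 + (Real.exp (ξ * δ) *
        (∑ i ∈ Finset.Icc 1 n, ((i : ℝ) / (n : ℝ)) ^ (1 - α) * (n.choose i : ℝ)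
            * (s j) ^ i * (1 - s j) ^ (n - i) * (z i (j+1)) ^ α) ^ (1/α)
        ) ^ (ρ/(1-ρ))) ^ ((1-ρ)/ρ))
    (hzInfrec : ∀ j < m,
      zInf j = (1 + (Real.exp (ξ * δ) * (s j) ^ (1/α - 1) * zInf (j+1))
        ^ (ρ/(1-ρ))) ^ ((1-ρ)/ρ)) :
    ∀ j ≤ m, ∃ K : ℝ, 0 < K ∧ ∀ n : ℕ, 1 ≤ n →
      |z n j - zInf j| ≤ K * (n : ℝ) ^ (-(1/2) : ℝ) :=
  finite_collective_value_convergence_general α ρ ξ δ hα1 hα0 m s hs ζ z zInf hzInfpos hzT hzInfT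
    hzrec hzInfrec
end

section
/- Fix α, ρ ∈ (−∞,1) \ {0}, real numbers a, b, k, and suppose K := (kα − 1)ρ/(α(ρ − 1)) + a + b²(α(ρ−1) − ρ)/(2ρ) > 0. Define g : (0,∞) → ℝ by g(λ) := (1/α)·(Kλ)^{α(ρ−1)/ρ}. Then g is twice differentiable on (0,∞) and for every λ > 0: α·g(λ)·[ (α g(λ))^{ρ/((ρ−1)α)}·(1/ρ − 1) + λ(k − 1/α) ] + a λ²·g'(λ) + (1/2) b² λ³·g''(λ) = 0. -/
/-!
On `(0, ∞)` the candidate `g` is a pure power `c λ^p` with `p = α(ρ - 1)/ρ`, so the Euler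
identities `λ g' = p g` and `λ² g'' = p(p - 1) g` hold, and `(α g)^{1/p} = Kλ`. Every term
of the equation then becomes `λ g` times a constant, and that constant,
`α K (1/ρ - 1) + α k - 1 + a p + b² p (p - 1)/2`, vanishes by the choice of `K`.
-/

open Set

section PowerFunction

variable {f : ℝ → ℝ} {c p l : ℝ}

theorem hasDerivAt_of_eqOn_const_mul_rpow (hf : EqOn f (fun x => c * x ^ p) (Ioi 0))
    (hl : 0 < l) : HasDerivAt f (c * p * l ^ (p - 1)) l := by
  have hpow : HasDerivAt (fun x => c * x ^ p) (c * (p * l ^ (p - 1))) l :=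
    (Real.hasDerivAt_rpow_const (Or.inl hl.ne')).const_mul c
  rw [← mul_assoc] at hpow
  exact hpow.congr_of_eventuallyEq (Filter.eventually_of_mem (Ioi_mem_nhds hl) hf)

theorem eqOn_deriv_of_eqOn_const_mul_rpow (hf : EqOn f (fun x => c * x ^ p) (Ioi 0)) :
    EqOn (deriv f) (fun x => c * p * x ^ (p - 1)) (Ioi 0) :=
  fun _ hx => (hasDerivAt_of_eqOn_const_mul_rpow hf hx).deriv

theorem mul_deriv_of_eqOn_const_mul_rpow (hf : EqOn f (fun x => c * x ^ p) (Ioi 0))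
    (hl : 0 < l) : l * deriv f l = p * f l := by
  rw [eqOn_deriv_of_eqOn_const_mul_rpow hf hl, hf hl]
  dsimp only
  rw [Real.rpow_sub_one hl.ne']
  field_simp

theorem sq_mul_deriv_deriv_of_eqOn_const_mul_rpow
    (hf : EqOn f (fun x => c * x ^ p) (Ioi 0)) (hl : 0 < l) :
    l ^ 2 * deriv (deriv f) l = p * (p - 1) * f l := by
  have hf_euler := mul_deriv_of_eqOn_const_mul_rpow hf hl
  have hf'_euler := mul_deriv_of_eqOn_const_mul_rpow (eqOn_deriv_of_eqOn_const_mul_rpow hf) hl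
  linear_combination l * hf'_euler + (p - 1) * hf_euler

end PowerFunction

theorem hjb_coefficient_eq_zero {α ρ a b k K p : ℝ} (hα : α ≠ 0) (hρ1 : ρ ≠ 1) (hρ0 : ρ ≠ 0)
    (hK : K = (k * α - 1) * ρ / (α * (ρ - 1)) + a + b ^ 2 * (α * (ρ - 1) - ρ) / (2 * ρ))
    (hp : p = α * (ρ - 1) / ρ) :
    α * K * (1 / ρ - 1) + (α * k - 1) + a * p + (1 / 2) * b ^ 2 * p * (p - 1) = 0 := by
  have hρ1' : ρ - 1 ≠ 0 := sub_ne_zero.mpr hρ1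
  subst hK hp
  field_simp
  ring

theorem stylised_hjb_solution_general (α ρ a b k : ℝ)
    (hα0 : α ≠ 0) (hρ1 : ρ < 1) (hρ0 : ρ ≠ 0)
    (hK : 0 < (k * α - 1) * ρ / (α * (ρ - 1)) + a + b^2 * (α * (ρ - 1) - ρ) / (2 * ρ)) :
    ∀ K : ℝ, K = (k * α - 1) * ρ / (α * (ρ - 1)) + a + b^2 * (α * (ρ - 1) - ρ) / (2 * ρ) →
    ∀ g : ℝ → ℝ, (g = fun l => (1/α) * (K * l) ^ (α * (ρ - 1) / ρ)) →
      (∀ l : ℝ, 0 < l → DifferentiableAt ℝ g l ∧ DifferentiableAt ℝ (deriv g) l) ∧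
      (∀ l : ℝ, 0 < l →
        α * g l * ((α * g l) ^ (ρ / ((ρ - 1) * α)) * (1/ρ - 1) + l * (k - 1/α))
          + a * l^2 * deriv g l + (1/2) * b^2 * l^3 * deriv (deriv g) l = 0) := by
  rintro K hK_def g hg_def
  rw [← hK_def] at hK
  set p := α * (ρ - 1) / ρ with hp
  have hp0 : p ≠ 0 := div_ne_zero (mul_ne_zero hα0 (sub_ne_zero.mpr hρ1.ne)) hρ0
  have hg : EqOn g (fun l => K ^ p / α * l ^ p) (Ioi 0) := by
    intro l hl
    simp only [hg_def]
    rw [Real.mul_rpow hK.le (le_of_lt hl)]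
    ring
  have hg' := eqOn_deriv_of_eqOn_const_mul_rpow hg
  refine ⟨fun l hl => ⟨(hasDerivAt_of_eqOn_const_mul_rpow hg hl).differentiableAt,
    (hasDerivAt_of_eqOn_const_mul_rpow hg' hl).differentiableAt⟩, fun l hl => ?_⟩
  have hroot : (α * g l) ^ (ρ / ((ρ - 1) * α)) = K * l := by
    simp only [hg_def]
    rw [← mul_assoc, mul_one_div_cancel hα0, one_mul,
      show ρ / ((ρ - 1) * α) = p⁻¹ by rw [hp, inv_div, mul_comm],
      Real.rpow_rpow_inv (by positivity) hp0]
  rw [hroot]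
  linear_combination (norm := skip)
    l * g l * hjb_coefficient_eq_zero hα0 hρ1.ne hρ0 hK_def hp
      + a * l * mul_deriv_of_eqOn_const_mul_rpow hg hl
      + (1 / 2) * b ^ 2 * l * sq_mul_deriv_deriv_of_eqOn_const_mul_rpow hg hl
  field_simp
  ring

/-- Verification of the analytic solution of the stationary HJB equation for the
stylised mortality model `dλ = aλ² dt + bλ^{3/2} dW` with `μ = r = δ = 0`:
`g(λ) = (1/α)(Kλ)^{α(ρ−1)/ρ}` with
`K = (kα − 1)ρ/(α(ρ − 1)) + a + b²(α(ρ−1) − ρ)/(2ρ) > 0` is twice differentiable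
on `(0,∞)` and solves
`αg[(αg)^{ρ/((ρ−1)α)}(1/ρ − 1) + λ(k − 1/α)] + aλ²g' + (1/2)b²λ³g'' = 0`. -/
theorem stylised_hjb_solution (α ρ a b k : ℝ)
    (hα1 : α < 1) (hα0 : α ≠ 0) (hρ1 : ρ < 1) (hρ0 : ρ ≠ 0)
    (hK : 0 < (k * α - 1) * ρ / (α * (ρ - 1)) + a + b^2 * (α * (ρ - 1) - ρ) / (2 * ρ)) :
    ∀ K : ℝ, K = (k * α - 1) * ρ / (α * (ρ - 1)) + a + b^2 * (α * (ρ - 1) - ρ) / (2 * ρ) →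
    ∀ g : ℝ → ℝ, (g = fun l => (1/α) * (K * l) ^ (α * (ρ - 1) / ρ)) →
      (∀ l : ℝ, 0 < l → DifferentiableAt ℝ g l ∧ DifferentiableAt ℝ (deriv g) l) ∧
      (∀ l : ℝ, 0 < l →
        α * g l * ((α * g l) ^ (ρ / ((ρ - 1) * α)) * (1/ρ - 1) + l * (k - 1/α))
          + a * l^2 * deriv g l + (1/2) * b^2 * l^3 * deriv (deriv g) l = 0) :=
  stylised_hjb_solution_general α ρ a b k hα0 hρ1 hρ0 hK
end
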